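/- Let S = ⟨n₁,n₂,n₃,n₄⟩ be an almost symmetric numerical semigroup. Then the number of pairs (i,j) with i ≠ j such that λ_{ij}·n_j - n_i ∈ PF(S) \ {F(S)} is at least 2(t(S) - 1), where λ_{ij} = max{K ∈ ℕ : K·n_j - n_i ∉ S} and t(S) = |PF(S)|. -/

import Mathlib

/-!
For `f ∈ PF(S)` write `f + nᵢ = ∑ₖ Aᵢₖ nₖ` with `Aᵢᵢ = 0` (an RF-matrix of `f` with its diagonal
`-1` replaced by `0`). A row with a single nonzero entry `Aᵢⱼ` says `f = Aᵢⱼ nⱼ - nᵢ`, and then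
`Aᵢⱼ = λᵢⱼ`. If `f + f' = F` and `B` is such a matrix for `f'`, then `Aᵢⱼ` and `Bⱼᵢ` are never both
nonzero, for otherwise `F = (f + nᵢ - nⱼ) + (f' + nⱼ - nᵢ) ∈ S`. So `A` and `B` have at most
`e(e-1)` nonzero entries together while each of their `2e` rows has at least one, which forces at
least `4e - e(e-1)` rows with a single entry: `4` when `e = 4`. Almost symmetry pairs every
`f ∈ PF(S) \ {F}` with `F - f ∈ PF(S) \ {F}`, and distinct `f` give distinct pairs `(i, j)`;
summing over `PF(S) \ {F}` gives the bound.
-/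

/-- The numerical semigroup generated by `n`, viewed inside `ℤ`. -/
def NS {e : ℕ} (n : Fin e → ℕ) : Set ℤ :=
  {x | ∃ a : Fin e → ℕ, x = ∑ j, (a j : ℤ) * n j}

/-- Pseudo-Frobenius numbers of the numerical semigroup generated by `n`. -/
def PF {e : ℕ} (n : Fin e → ℕ) : Set ℤ :=
  {x | x ∉ NS n ∧ ∀ i, x + (n i : ℤ) ∈ NS n}

/-- `F` is the Frobenius number: the maximum of `ℤ \ S`. -/
def IsFrob {e : ℕ} (n : Fin e → ℕ) (F : ℤ) : Prop :=
  F ∉ NS n ∧ ∀ x : ℤ, F < x → x ∈ NS n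

/-- Almost symmetry with respect to the Frobenius number `F`. -/
def AlmostSym {e : ℕ} (n : Fin e → ℕ) (F : ℤ) : Prop :=
  ∀ x : ℤ, x ∉ NS n → F - x ∉ NS n → (x ∈ PF n ∧ F - x ∈ PF n)

/-- `A` is an RF-matrix for `f`. -/
def IsRF {e : ℕ} (n : Fin e → ℕ) (f : ℤ) (A : Matrix (Fin e) (Fin e) ℤ) : Prop :=
  (∀ i, A i i = -1) ∧ (∀ i j, i ≠ j → 0 ≤ A i j) ∧
    (∀ i, ∑ j, A i j * (n j : ℤ) = f)

/-- `K = λ_{ij} = max {K ∈ ℕ : K·n_j - n_i ∉ S}`. -/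
def IsLam {e : ℕ} (n : Fin e → ℕ) (i j : Fin e) (K : ℕ) : Prop :=
  ((K : ℤ) * n j - n i ∉ NS n) ∧
    ∀ L : ℕ, ((L : ℤ) * n j - n i ∉ NS n) → L ≤ K

/-- `n` is a minimal generating system. -/
def MinGen {e : ℕ} (n : Fin e → ℕ) : Prop :=
  ∀ i, ¬ ∃ a : Fin e → ℕ, a i = 0 ∧ (n i : ℤ) = ∑ j, (a j : ℤ) * n j

open Finset

variable {e : ℕ} {n : Fin e → ℕ}

lemma zero_mem_NS : (0 : ℤ) ∈ NS n := ⟨0, by simp⟩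

lemma add_mem_NS {x y : ℤ} (hx : x ∈ NS n) (hy : y ∈ NS n) : x + y ∈ NS n := by
  obtain ⟨a, rfl⟩ := hx
  obtain ⟨b, rfl⟩ := hy
  exact ⟨a + b, by simp [add_mul, sum_add_distrib]⟩

lemma nonneg_of_mem_NS {x : ℤ} (hx : x ∈ NS n) : 0 ≤ x := by
  obtain ⟨a, rfl⟩ := hx
  positivity

lemma sum_add_single_mul (a : Fin e → ℕ) (j : Fin e) (m : ℕ) :
    ∑ k, (((a + Pi.single j m : Fin e → ℕ) k : ℕ) : ℤ) * n k = ∑ k, (a k : ℤ) * n k + m * n j := by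
  simp [add_mul, sum_add_distrib, Pi.single_apply]

lemma natCast_mul_mem_NS (m : ℕ) (j : Fin e) : (m : ℤ) * n j ∈ NS n :=
  ⟨Pi.single j m, by simpa using (sum_add_single_mul (n := n) 0 j m).symm⟩

lemma sub_mem_NS_of_coeff_ne_zero {x : ℤ} {a : Fin e → ℕ} {j : Fin e}
    (hx : x = ∑ k, (a k : ℤ) * n k) (hj : a j ≠ 0) : x - n j ∈ NS n := by
  refine ⟨a - Pi.single j 1, ?_⟩
  have hsplit : a - Pi.single j 1 + Pi.single j 1 = a := by
    ext k
    rcases eq_or_ne k j with rfl | hk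
    · simp only [Pi.add_apply, Pi.sub_apply, Pi.single_eq_same]
      omega
    · simp [hk]
  rw [hx, ← hsplit, sum_add_single_mul, hsplit]
  ring

lemma exists_sub_mem_NS {x : ℤ} (hx : x ∈ NS n) (hx0 : x ≠ 0) : ∃ j, x - n j ∈ NS n := by
  obtain ⟨a, ha⟩ := hx
  obtain ⟨j, hj⟩ : ∃ j, a j ≠ 0 := by
    by_contra! h
    exact hx0 (by simp [ha, h])
  exact ⟨j, sub_mem_NS_of_coeff_ne_zero ha hj⟩

lemma MinGen.pos (hmin : MinGen n) (i : Fin e) : 0 < n i :=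
  Nat.pos_of_ne_zero fun h => hmin i ⟨0, rfl, by simp [h]⟩

lemma MinGen.sub_notMem_NS (hmin : MinGen n) {i j : Fin e} (hij : i ≠ j) :
    (n j : ℤ) - n i ∉ NS n := by
  rintro ⟨a, ha⟩
  by_cases hj : a j = 0
  · refine hmin j ⟨a + Pi.single i 1, by simp [hj, hij.symm], ?_⟩
    rw [sum_add_single_mul, ← ha]
    ring
  · have := nonneg_of_mem_NS (sub_mem_NS_of_coeff_ne_zero ha hj)
    have := hmin.pos i
    omega

lemma add_mem_NS_of_mem_PF {f s : ℤ} (hf : f ∈ PF n) (hs : s ∈ NS n) (hs0 : s ≠ 0) :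
    f + s ∈ NS n := by
  obtain ⟨j, hj⟩ := exists_sub_mem_NS hs hs0
  simpa using add_mem_NS (hf.2 j) hj

lemma add_ne_zero_of_mem_PF [Nontrivial (Fin e)] (hmin : MinGen n) {f : ℤ} (hf : f ∈ PF n)
    (i : Fin e) : f + n i ≠ 0 := by
  intro hfi
  obtain ⟨j, hji⟩ := exists_ne i
  refine hmin.sub_notMem_NS hji.symm ?_
  simpa [show f = -n i by omega, neg_add_eq_sub] using hf.2 j

lemma exists_rows_of_mem_PF {f : ℤ} (hf : f ∈ PF n) :
    ∃ A : Fin e → Fin e → ℕ, (∀ i, A i i = 0) ∧ ∀ i, f + n i = ∑ k, (A i k : ℤ) * n k := by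
  choose A hA using hf.2
  refine ⟨A, fun i => ?_, hA⟩
  by_contra hi
  simpa using hf.1 (by simpa using sub_mem_NS_of_coeff_ne_zero (hA i) hi)

lemma add_mem_NS_of_mem_PF_of_lt (hpos : ∀ i, 0 < n i) {f : ℤ} (hf : f ∈ PF n) (j : Fin e)
    {K L : ℕ} (hKL : K < L) : f + (L - K : ℤ) * n j ∈ NS n := by
  have hj : (0 : ℤ) < n j := by exact_mod_cast hpos j
  refine add_mem_NS_of_mem_PF hf ?_ (mul_pos (by omega) hj).ne'
  simpa [Nat.cast_sub hKL.le] using natCast_mul_mem_NS (n := n) (L - K) j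

lemma isLam_of_mem_PF (hpos : ∀ i, 0 < n i) {f : ℤ} (hf : f ∈ PF n) {i j : Fin e} {K : ℕ}
    (hK : f + n i = K * n j) : IsLam n i j K := by
  refine ⟨by simpa [← hK] using hf.1, fun L hL => ?_⟩
  by_contra! hKL
  refine hL ?_
  convert add_mem_NS_of_mem_PF_of_lt hpos hf j hKL using 1
  linear_combination -hK

open Classical in
noncomputable def lambdaPairs (n : Fin e → ℕ) (f : ℤ) : Finset (Fin e × Fin e) :=
  {p | p.1 ≠ p.2 ∧ ∃ K : ℕ, f + n p.1 = K * n p.2}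

lemma mem_lambdaPairs {f : ℤ} {p : Fin e × Fin e} :
    p ∈ lambdaPairs n f ↔ p.1 ≠ p.2 ∧ ∃ K : ℕ, f + n p.1 = K * n p.2 := by
  simp [lambdaPairs]

lemma disjoint_lambdaPairs (hpos : ∀ i, 0 < n i) {f g : ℤ} (hf : f ∈ PF n) (hg : g ∈ PF n)
    (hfg : f ≠ g) : Disjoint (lambdaPairs n f) (lambdaPairs n g) := by
  rw [disjoint_left]
  rintro ⟨i, j⟩ hpf hpg
  obtain ⟨-, K, hK⟩ := mem_lambdaPairs.1 hpf
  obtain ⟨-, L, hL⟩ := mem_lambdaPairs.1 hpg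
  rcases lt_trichotomy K L with hKL | rfl | hLK
  · refine hg.1 ?_
    convert add_mem_NS_of_mem_PF_of_lt hpos hf j hKL using 1
    linear_combination hL - hK
  · exact hfg (by linarith)
  · refine hf.1 ?_
    convert add_mem_NS_of_mem_PF_of_lt hpos hg j hLK using 1
    linear_combination hK - hL

lemma two_mul_card_le_sum_add_card_filter_eq_one {ι : Type*} [Fintype ι] (r : ι → ℕ)
    (hr : ∀ i, r i ≠ 0) : 2 * Fintype.card ι ≤ ∑ i, r i + #{i | r i = 1} := by
  rw [card_filter, ← sum_add_distrib, Fintype.card_eq_sum_ones, mul_sum]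
  refine sum_le_sum fun i _ => ?_
  have := hr i
  split_ifs <;> omega

section Rows

variable {f : ℤ} {A : Fin e → Fin e → ℕ}

lemma card_support_ne_zero [Nontrivial (Fin e)] (hmin : MinGen n) (hf : f ∈ PF n)
    (hAf : ∀ i, f + n i = ∑ k, (A i k : ℤ) * n k) (i : Fin e) : #{j | A i j ≠ 0} ≠ 0 := by
  rw [Ne, card_eq_zero, filter_eq_empty_iff]
  intro h
  apply add_ne_zero_of_mem_PF hmin hf i
  simp_all

lemma card_rows_single_le_card_lambdaPairs (hA : ∀ i, A i i = 0)
    (hAf : ∀ i, f + n i = ∑ k, (A i k : ℤ) * n k) :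
    #{i | #{j | A i j ≠ 0} = 1} ≤ #(lambdaPairs n f) := by
  refine (card_le_card fun i hi => ?_).trans (card_image_le (f := Prod.fst))
  obtain ⟨j, hj⟩ := card_eq_one.1 (mem_filter.1 hi).2
  have hsupp : ∀ k, A i k ≠ 0 ↔ k = j := fun k => by
    simpa using congrArg (k ∈ ·) hj
  refine mem_image.2 ⟨(i, j), mem_lambdaPairs.2 ⟨?_, A i j, ?_⟩, rfl⟩
  · exact fun hij => (hsupp i).2 hij (hA i)
  · rw [hAf i, sum_eq_single j (fun k _ hk => by simp [not_not.1 (mt (hsupp k).1 hk)])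
      (by simp)]

end Rows

lemma coeff_eq_zero_of_transpose_ne_zero {F f f' : ℤ} (hF : F ∉ NS n) (hsum : f + f' = F)
    {A B : Fin e → Fin e → ℕ} (hAf : ∀ i, f + n i = ∑ k, (A i k : ℤ) * n k)
    (hBf : ∀ i, f' + n i = ∑ k, (B i k : ℤ) * n k) {i j : Fin e} (hAij : A i j ≠ 0) :
    B j i = 0 := by
  by_contra hBji
  refine hF ?_
  convert add_mem_NS (sub_mem_NS_of_coeff_ne_zero (hAf i) hAij)
    (sub_mem_NS_of_coeff_ne_zero (hBf j) hBji) using 1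
  linear_combination -hsum

lemma sum_card_support_add_sum_card_support_le {A B : Fin e → Fin e → ℕ}
    (hA : ∀ i, A i i = 0) (hB : ∀ i, B i i = 0) (horth : ∀ i j, A i j ≠ 0 → B j i = 0) :
    ∑ i, #{j | A i j ≠ 0} + ∑ i, #{j | B i j ≠ 0} ≤ e * (e - 1) := by
  have hcomm : ∑ i, #{j | B i j ≠ 0} = ∑ i, #{j | B j i ≠ 0} :=
    sum_card_bipartiteAbove_eq_sum_card_bipartiteBelow (r := fun i j => B i j ≠ 0)
  have hrow : ∀ i, #{j | A i j ≠ 0} + #{j | B j i ≠ 0} ≤ e - 1 := fun i => by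
    rw [← card_union_of_disjoint]
    · calc _ ≤ #(univ.erase i) := card_le_card fun j => by
            simp only [mem_union, mem_filter, mem_univ, true_and, mem_erase, and_true]
            rintro (h | h) rfl
            exacts [h (hA j), h (hB j)]
        _ = e - 1 := by simp
    · exact disjoint_filter.2 fun j _ hAij => not_not.2 (horth i j hAij)
  rw [hcomm, ← sum_add_distrib]
  calc _ ≤ ∑ _i : Fin e, (e - 1) := sum_le_sum fun i _ => hrow i
    _ = e * (e - 1) := by simp

lemma four_mul_le_card_lambdaPairs_add_card_lambdaPairs [Nontrivial (Fin e)] (hmin : MinGen n)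
    {F f f' : ℤ} (hF : F ∉ NS n) (hf : f ∈ PF n) (hf' : f' ∈ PF n) (hsum : f + f' = F) :
    4 * e ≤ #(lambdaPairs n f) + #(lambdaPairs n f') + e * (e - 1) := by
  obtain ⟨A, hA, hAf⟩ := exists_rows_of_mem_PF hf
  obtain ⟨B, hB, hBf⟩ := exists_rows_of_mem_PF hf'
  have hA2 := two_mul_card_le_sum_add_card_filter_eq_one _ (card_support_ne_zero hmin hf hAf)
  have hB2 := two_mul_card_le_sum_add_card_filter_eq_one _ (card_support_ne_zero hmin hf' hBf)
  have hAsingle := card_rows_single_le_card_lambdaPairs hA hAf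
  have hBsingle := card_rows_single_le_card_lambdaPairs hB hBf
  have hsupp := sum_card_support_add_sum_card_support_le hA hB
    fun i j => coeff_eq_zero_of_transpose_ne_zero hF hsum hAf hBf
  simp only [Fintype.card_fin] at hA2 hB2
  omega

lemma IsFrob.mem_PF (hpos : ∀ i, 0 < n i) {F : ℤ} (hF : IsFrob n F) : F ∈ PF n :=
  ⟨hF.1, fun i => hF.2 _ (by have := hpos i; omega)⟩

lemma IsFrob.finite_PF [Nonempty (Fin e)] {F : ℤ} (hF : IsFrob n F) : (PF n).Finite := by
  obtain ⟨i⟩ := ‹Nonempty (Fin e)›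
  refine (Set.finite_Icc (-(n i : ℤ)) F).subset fun f hf => ⟨?_, ?_⟩
  · have := nonneg_of_mem_NS (hf.2 i)
    omega
  · by_contra! h
    exact hf.1 (hF.2 f h)

lemma AlmostSym.sub_mem_PF {F : ℤ} (hAS : AlmostSym n F) (hF : F ∉ NS n) {f : ℤ}
    (hf : f ∈ PF n) (hfF : f ≠ F) : F - f ∈ PF n := by
  refine (hAS f hf.1 fun hFf => hF ?_).2
  simpa using add_mem_NS_of_mem_PF hf hFf (sub_ne_zero.2 hfF.symm)

lemma sum_card_lambdaPairs_le_ncard (hpos : ∀ i, 0 < n i) {F : ℤ} {D : Finset ℤ}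
    (hD : ∀ f ∈ D, f ∈ PF n ∧ f ≠ F) :
    ∑ f ∈ D, #(lambdaPairs n f) ≤ {p : Fin e × Fin e | p.1 ≠ p.2 ∧ ∃ K : ℕ,
      IsLam n p.1 p.2 K ∧ ((K : ℤ) * n p.2 - n p.1) ∈ PF n \ {F}}.ncard := by
  rw [← card_biUnion fun f hf g hg hfg =>
    disjoint_lambdaPairs hpos (hD f hf).1 (hD g hg).1 hfg, ← Set.ncard_coe_finset]
  refine Set.ncard_le_ncard (fun p hp => ?_) (Set.toFinite _)
  obtain ⟨f, hf, hp⟩ := mem_biUnion.1 hp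
  obtain ⟨hfPF, hfF⟩ := hD f hf
  obtain ⟨hij, K, hK⟩ := mem_lambdaPairs.1 hp
  have hKf : (K : ℤ) * n p.2 - n p.1 = f := by linarith
  exact ⟨hij, K, isLam_of_mem_PF hpos hfPF hK, hKf ▸ ⟨hfPF, hfF⟩⟩

theorem ncard_PF_sub_one_mul_le [Nontrivial (Fin e)] (hmin : MinGen n) {F : ℤ}
    (hF : IsFrob n F) (hAS : AlmostSym n F) :
    ((PF n).ncard - 1) * (4 * e) ≤
      2 * {p : Fin e × Fin e | p.1 ≠ p.2 ∧ ∃ K : ℕ, IsLam n p.1 p.2 K ∧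
        ((K : ℤ) * n p.2 - n p.1) ∈ PF n \ {F}}.ncard + ((PF n).ncard - 1) * (e * (e - 1)) := by
  have hpos := hmin.pos
  set D := hF.finite_PF.toFinset.erase F
  have hD : ∀ f, f ∈ D ↔ f ∈ PF n ∧ f ≠ F := by simp [D, and_comm]
  have hDcard : #D = (PF n).ncard - 1 := by
    rw [card_erase_of_mem (by simpa using hF.mem_PF hpos),
      Set.ncard_eq_toFinset_card _ hF.finite_PF]
  have hinv : ∀ f ∈ D, F - f ∈ D := fun f hf => by
    obtain ⟨hfPF, hfF⟩ := (hD f).1 hf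
    refine (hD _).2 ⟨hAS.sub_mem_PF hF.1 hfPF hfF, fun h => hfPF.1 ?_⟩
    simpa [show f = 0 by linarith] using zero_mem_NS
  have hswap : ∑ f ∈ D, #(lambdaPairs n (F - f)) = ∑ f ∈ D, #(lambdaPairs n f) :=
    sum_nbij' (F - ·) (F - ·) hinv hinv (by simp) (by simp) (by simp)
  have hsum : #D * (4 * e) ≤ 2 * ∑ f ∈ D, #(lambdaPairs n f) + #D * (e * (e - 1)) :=
    calc #D * (4 * e) = ∑ _f ∈ D, 4 * e := by rw [sum_const, smul_eq_mul]
      _ ≤ ∑ f ∈ D, (#(lambdaPairs n f) + #(lambdaPairs n (F - f)) + e * (e - 1)) :=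
        sum_le_sum fun f hf => four_mul_le_card_lambdaPairs_add_card_lambdaPairs hmin hF.1
          ((hD f).1 hf).1 ((hD _).1 (hinv f hf)).1 (by ring)
      _ = _ := by rw [sum_add_distrib, sum_add_distrib, hswap, sum_const, smul_eq_mul]; ring
  have hunion := sum_card_lambdaPairs_le_ncard hpos fun f hf => (hD f).1 hf
  rw [← hDcard]
  linarith

theorem stmt19_general (n : Fin 4 → ℕ)
    (hmin : MinGen n)
    (F : ℤ) (hF : IsFrob n F) (hAS : AlmostSym n F) :
    2 * ((PF n).ncard - 1) ≤
      {p : Fin 4 × Fin 4 | p.1 ≠ p.2 ∧ ∃ K : ℕ, IsLam n p.1 p.2 K ∧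
        ((K : ℤ) * n p.2 - n p.1) ∈ PF n \ {F}}.ncard := by
  have := ncard_PF_sub_one_mul_le hmin hF hAS
  omega

theorem stmt19 (n : Fin 4 → ℕ)
    (hpos : ∀ i, 0 < n i)
    (hgcd : Finset.univ.gcd n = 1)
    (hmin : MinGen n)
    (F : ℤ) (hF : IsFrob n F) (hAS : AlmostSym n F) :
    2 * ((PF n).ncard - 1) ≤
      {p : Fin 4 × Fin 4 | p.1 ≠ p.2 ∧ ∃ K : ℕ, IsLam n p.1 p.2 K ∧
        ((K : ℤ) * n p.2 - n p.1) ∈ PF n \ {F}}.ncard :=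
  stmt19_general n hmin F hF hAS
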